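/- arXiv:1812.04668 — 2 statements merged into one kernel-verified Lean document; each statement's English description precedes it below -/
import Mathlib

section
/- Projection formula consequence: let M/L be a finite field extension, a ∈ L^×, and suppose there exist finite extensions L_1,...,L_r of L, elements x_i ∈ (M ⊗_L L_i)^× with N_{M⊗L_i/L_i}(x_i) = a, and elements y_i ∈ K_q^M(L_i) with {a_2,...,a_{q+1}} = Σ_i N_{L_i/L}(y_i) in K_q^M(L). Then {a, a_2, ..., a_{q+1}} lies in the image of the norm N_{M/L}: K_{q+1}^M(M) → K_{q+1}^M(L). -/
open scoped TensorProduct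

/-- The Steinberg subgroup of the `q`-fold tensor power of `Lˣ` (written additively):
generated by the tensors `x₁ ⊗ ... ⊗ x_q` with `x i + x j = 1` for some `i ≠ j`. -/
noncomputable def SteinbergRel (q : ℕ) (L : Type) [Field L] :
    AddSubgroup (⨂[ℤ] (_ : Fin q), Additive Lˣ) :=
  AddSubgroup.closure
    {t | ∃ (u : Fin q → Lˣ) (i j : Fin q), i ≠ j ∧ (u i : L) + (u j : L) = 1 ∧
      t = PiTensorProduct.tprod ℤ (fun k => Additive.ofMul (u k))}

/-- The `q`-th Milnor K-group of a field `L`. -/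
noncomputable def MilnorK (q : ℕ) (L : Type) [Field L] :=
  (⨂[ℤ] (_ : Fin q), Additive Lˣ) ⧸ SteinbergRel q L

noncomputable instance (q : ℕ) (L : Type) [Field L] : AddCommGroup (MilnorK q L) :=
  inferInstanceAs (AddCommGroup ((⨂[ℤ] (_ : Fin q), Additive Lˣ) ⧸ SteinbergRel q L))

/-- The symbol `{u 0, ..., u (q-1)}` in the `q`-th Milnor K-group. -/
noncomputable def MilnorSymbol (q : ℕ) {L : Type} [Field L] (u : Fin q → Lˣ) :
    MilnorK q L :=
  QuotientAddGroup.mk (PiTensorProduct.tprod ℤ (fun k => Additive.ofMul (u k)))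

/-- Projection formula consequence (Proposition 2.4(i) computation of the paper).
`L/K` fields, `M/L` finite, `Li i` finite extensions of `L`, `MLi i` the (field factors
of the) tensor products `M ⊗_L Li i`.  The `pair` maps are the pairings
`K_1 × K_q → K_{q+1}`, the `N` maps are the Milnor K-theory norms, `htrans` is
transitivity of norms for `M ⊗ L_i / M / L` and `M ⊗ L_i / L_i / L`, and the `hproj`
hypotheses are instances of the projection formula; on `K_1` the norm is the field norm. -/
theorem stmt8 (q r : ℕ)
    (L M : Type) [Field L] [Field M] [Algebra L M] [FiniteDimensional L M]
    (Li : Fin r → Type) [∀ i, Field (Li i)] [∀ i, Algebra L (Li i)]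
    [∀ i, FiniteDimensional L (Li i)]
    (MLi : Fin r → Type) [∀ i, Field (MLi i)] [∀ i, Algebra M (MLi i)]
    [∀ i, Algebra (Li i) (MLi i)] [∀ i, FiniteDimensional (Li i) (MLi i)]
    -- pairings K_1 × K_q → K_{q+1}
    (pairL : Lˣ → MilnorK q L →+ MilnorK (q + 1) L)
    (pairLi : ∀ i, (Li i)ˣ → MilnorK q (Li i) →+ MilnorK (q + 1) (Li i))
    (pairMLi : ∀ i, (MLi i)ˣ → MilnorK q (Li i) →+ MilnorK (q + 1) (MLi i))
    -- norm maps
    (NM : MilnorK (q + 1) M →+ MilnorK (q + 1) L)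
    (NLiq : ∀ i, MilnorK q (Li i) →+ MilnorK q L)
    (NLiq1 : ∀ i, MilnorK (q + 1) (Li i) →+ MilnorK (q + 1) L)
    (NMLiM : ∀ i, MilnorK (q + 1) (MLi i) →+ MilnorK (q + 1) M)
    (NMLiLi : ∀ i, MilnorK (q + 1) (MLi i) →+ MilnorK (q + 1) (Li i))
    -- compatibility of the pairing with symbols
    (hpairL : ∀ (u : Lˣ) (as : Fin q → Lˣ),
      pairL u (MilnorSymbol q as) = MilnorSymbol (q + 1) (Fin.cons u as))
    -- transitivity of norms
    (htrans : ∀ i (z : MilnorK (q + 1) (MLi i)),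
      NM (NMLiM i z) = NLiq1 i (NMLiLi i z))
    -- projection formulas
    (hprojMLi : ∀ i (x : (MLi i)ˣ) (y : MilnorK q (Li i)),
      NMLiLi i (pairMLi i x y) = pairLi i (Units.map (Algebra.norm (Li i)) x) y)
    (hprojLi : ∀ i (u : Lˣ) (z : MilnorK q (Li i)),
      NLiq1 i (pairLi i (Units.map (algebraMap L (Li i)).toMonoidHom u) z)
        = pairL u (NLiq i z))
    -- the hypotheses of the statement
    (a : Lˣ) (x : ∀ i, (MLi i)ˣ)
    (hx : ∀ i, Units.map (Algebra.norm (Li i)) (x i)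
      = Units.map (algebraMap L (Li i)).toMonoidHom a)
    (as : Fin q → Lˣ) (y : ∀ i, MilnorK q (Li i))
    (hy : MilnorSymbol q as = ∑ i, NLiq i (y i)) :
    MilnorSymbol (q + 1) (Fin.cons a as) ∈ AddMonoidHom.range NM := by
  refine ⟨∑ i, NMLiM i (pairMLi i (x i) (y i)), ?_⟩
  rw [map_sum]
  calc ∑ i, NM (NMLiM i (pairMLi i (x i) (y i)))
      = ∑ i, pairL a (NLiq i (y i)) := by
        refine Finset.sum_congr rfl fun i _ => ?_
        rw [htrans, hprojMLi, hx, hprojLi]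
    _ = pairL a (∑ i, NLiq i (y i)) := (map_sum (pairL a) _ _).symm
    _ = MilnorSymbol (q + 1) (Fin.cons a as) := by rw [← hy, hpairL]
end

section
/- Let ℓ be a prime and K a field. Suppose that for every tower of finite extensions M/L/K with [M:L] = ℓ, every symbol {a_1,...,a_q} ∈ K_q^M(L) is congruent modulo ℓ·K_q^M(L) to a norm from M whenever M = L(a^{1/ℓ}) for some a ∈ L^×. Then for every finite extension L of K, every symbol of length q+1 in K_{q+1}^M(L) lies in ℓ·K_{q+1}^M(L). -/
open scoped TensorProduct

/-- A field extension of `L`, bundled. -/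
structure FieldExt (L : Type) [Field L] where
  carrier : Type
  [field : Field carrier]
  [alg : Algebra L carrier]

attribute [instance] FieldExt.field FieldExt.alg

/-- The composite extension `F/E/K` viewed as an extension of `K`. -/
noncomputable def FieldExt.comp {K : Type} [Field K] (E : FieldExt K)
    (F : FieldExt E.carrier) : FieldExt K where
  carrier := F.carrier
  field := F.field
  alg := ((algebraMap E.carrier F.carrier).comp (algebraMap K E.carrier)).toAlgebra

/-! If `a` is an `ℓ`-th power in `L`, then `{a₁, …, a_q, a}` is `ℓ` times a symbol by
multilinearity. Otherwise `M = L(a^{1/ℓ})` has degree `ℓ` over `L`; writing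
`{a₁, …, a_q} = N_{M/L}(z) + ℓ w`, the projection formula gives
`{a₁, …, a_q, a} = N_{M/L}({z, a}) + ℓ {w, a}`, and `{z, a} = ℓ {z, a^{1/ℓ}}` in `K_{q+1}^M(M)`. -/

namespace MilnorK

variable {q : ℕ} {L : Type} [Field L]

theorem milnorSymbol_update_zpow (u : Fin q → Lˣ) (i : Fin q) (v : Lˣ)
    (n : ℤ) :
    MilnorSymbol q (Function.update u i (v ^ n)) = n • MilnorSymbol q (Function.update u i v) := by
  have hofMul (w : Lˣ) : (fun k => Additive.ofMul (Function.update u i w k)) =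
      Function.update (fun k => Additive.ofMul (u k)) i (Additive.ofMul w) := by
    funext k
    by_cases hk : k = i
    · subst hk; simp
    · simp [Function.update_of_ne hk]
  simp only [MilnorSymbol, hofMul, ofMul_zpow, MultilinearMap.map_update_smul]
  exact QuotientAddGroup.mk_zsmul _ _ _

theorem closure_range_milnorSymbol :
    AddSubgroup.closure (Set.range (MilnorSymbol q (L := L))) = ⊤ := by
  rw [eq_top_iff]
  rintro z -
  obtain ⟨t, rfl⟩ := QuotientAddGroup.mk'_surjective (SteinbergRel q L) z
  induction t using PiTensorProduct.induction_on with
  | smul_tprod r f =>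
    rw [map_zsmul]
    exact zsmul_mem (AddSubgroup.subset_closure
      (Set.mem_range_self (f := MilnorSymbol q) fun k => Additive.toMul (f k))) r
  | add x y hx hy =>
    rw [map_add]
    exact add_mem hx hy

theorem addMonoidHom_ext {A : Type*} [AddCommGroup A] {f g : MilnorK q L →+ A}
    (h : ∀ u, f (MilnorSymbol q u) = g (MilnorSymbol q u)) : f = g :=
  AddMonoidHom.eq_of_eqOn_dense closure_range_milnorSymbol (by rintro _ ⟨u, rfl⟩; exact h u)

theorem pairing_zpow (pair : Lˣ → MilnorK q L →+ MilnorK (q + 1) L)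
    (hpair : ∀ (u : Lˣ) (as : Fin q → Lˣ),
      pair u (MilnorSymbol q as) = MilnorSymbol (q + 1) (Fin.snoc as u))
    (v : Lˣ) (n : ℤ) : pair (v ^ n) = n • pair v := by
  refine addMonoidHom_ext fun as => ?_
  have hsnoc (w : Lˣ) : (Fin.snoc as w : Fin (q + 1) → Lˣ) =
      Function.update (Fin.snoc as v) (Fin.last q) w :=
    (Fin.update_snoc_last ..).symm
  rw [AddMonoidHom.smul_apply, hpair, hpair, hsnoc (v ^ n), milnorSymbol_update_zpow, ← hsnoc v]

end MilnorK

theorem exists_kummer_extension {L : Type} [Field L] {ℓ : ℕ} (hℓ : ℓ.Prime) (a : L)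
    (ha : ∀ x : L, x ^ ℓ ≠ a) :
    ∃ F : FieldExt L, FiniteDimensional L F.carrier ∧ Module.finrank L F.carrier = ℓ ∧
      ∃ b : F.carrier, b ^ ℓ = algebraMap L F.carrier a ∧ Algebra.adjoin L {b} = ⊤ := by
  have hirr : Irreducible (Polynomial.X ^ ℓ - Polynomial.C a) :=
    X_pow_sub_C_irreducible_of_prime hℓ ha
  have := Fact.mk hirr
  let pb := AdjoinRoot.powerBasis hirr.ne_zero
  refine ⟨⟨AdjoinRoot (Polynomial.X ^ ℓ - Polynomial.C a)⟩, pb.finite, ?_,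
    AdjoinRoot.root _, root_X_pow_sub_C_pow ℓ a, AdjoinRoot.adjoinRoot_eq_top⟩
  rw [pb.finrank, AdjoinRoot.powerBasis_dim, Polynomial.natDegree_X_pow_sub_C]

/-- `Nq E F` and `Nq1 E F` are the norm maps of `F/E` in degrees `q` and `q + 1`, and
`pair L u` is `z ↦ {z, u}`. -/
theorem stmt10 (q ℓ : ℕ) (hℓ : ℓ.Prime) (K : Type) [Field K]
    (Nq : (E : FieldExt K) → (F : FieldExt E.carrier) →
      MilnorK q F.carrier →+ MilnorK q E.carrier)
    (Nq1 : (E : FieldExt K) → (F : FieldExt E.carrier) →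
      MilnorK (q + 1) F.carrier →+ MilnorK (q + 1) E.carrier)
    (pair : (L : Type) → [inst : Field L] → Lˣ → MilnorK q L →+ MilnorK (q + 1) L)
    (hpair : ∀ (L : Type) [inst : Field L] (u : Lˣ) (as : Fin q → Lˣ),
      pair L u (MilnorSymbol q as) = MilnorSymbol (q + 1) (Fin.snoc as u))
    (hproj : ∀ (E : FieldExt K) (F : FieldExt E.carrier) (u : E.carrierˣ)
        (z : MilnorK q F.carrier),
      Nq1 E F (pair F.carrier
          (Units.map (algebraMap E.carrier F.carrier).toMonoidHom u) z)
        = pair E.carrier u (Nq E F z))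
    (hyp : ∀ (E : FieldExt K), FiniteDimensional K E.carrier →
      ∀ (F : FieldExt E.carrier), FiniteDimensional E.carrier F.carrier →
      Module.finrank E.carrier F.carrier = ℓ →
      (∃ (a : E.carrierˣ) (b : F.carrier),
        b ^ ℓ = algebraMap E.carrier F.carrier (a : E.carrier) ∧
        Algebra.adjoin E.carrier {b} = ⊤) →
      ∀ as : Fin q → E.carrierˣ,
        ∃ (z : MilnorK q F.carrier) (w : MilnorK q E.carrier),
          MilnorSymbol q as = Nq E F z + (ℓ : ℤ) • w) :
    ∀ (E : FieldExt K), FiniteDimensional K E.carrier →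
      ∀ as : Fin (q + 1) → E.carrierˣ,
        ∃ w : MilnorK (q + 1) E.carrier,
          MilnorSymbol (q + 1) as = (ℓ : ℤ) • w := by
  intro E hE as
  obtain ⟨as', a, rfl⟩ : ∃ as' a, Fin.snoc as' a = as := ⟨_, _, Fin.snoc_init_self as⟩
  rw [← hpair]
  by_cases hpow : ∃ x : E.carrier, x ^ ℓ = a
  · obtain ⟨x, hx⟩ := hpow
    have hx0 : x ≠ 0 := ne_zero_pow hℓ.ne_zero (hx ▸ a.ne_zero)
    have ha : a = Units.mk0 x hx0 ^ (ℓ : ℤ) := Units.ext (by simp [hx])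
    exact ⟨pair _ (Units.mk0 x hx0) (MilnorSymbol q as'),
      by rw [ha, MilnorK.pairing_zpow _ (hpair _), AddMonoidHom.smul_apply]⟩
  · push Not at hpow
    obtain ⟨F, hF, hrank, b, hb, htop⟩ := exists_kummer_extension hℓ (a : E.carrier) hpow
    obtain ⟨z, w, hzw⟩ := hyp E hE F hF hrank ⟨a, b, hb, htop⟩ as'
    have hb0 : b ≠ 0 := ne_zero_pow hℓ.ne_zero (by simp [hb])
    have hab : Units.map (algebraMap E.carrier F.carrier).toMonoidHom a =
        Units.mk0 b hb0 ^ (ℓ : ℤ) := Units.ext (by simp [hb])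
    refine ⟨Nq1 E F (pair _ (Units.mk0 b hb0) z) + pair _ a w, ?_⟩
    rw [hzw, map_add, map_zsmul, ← hproj, hab, MilnorK.pairing_zpow _ (hpair _),
      AddMonoidHom.smul_apply, map_zsmul, smul_add]
end
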